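/- Orthogonality of influence functions: when conditional mean transportability over S holds for treatment a=0 (so g_{1,0}(X) = g_{0,0}(X) =: g_0(X) a.s. on the index support), the influence functions Ψ(O) = Γ_{1,1}(O) − Γ_{0,2}(O) and Δ(O) = Γ_{1,0}(O) − Γ_{0,0}(O) satisfy E[Δ(O)·Ψ(O)] = 0. -/

import Mathlib

/-! Under transportability for `a = 0` the plug-in parts of `Γ_{1,0}` and `Γ_{0,0}` cancel on
`S = 1`, so `Δ` reduces to its weighted residual terms, supported on `{A = 0}`. There `Ψ` loses
its own residual terms (supported on `{A = 1}` and `{A = 2}`) and is a function of `X`, so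
`Δ · Ψ = c(X) · I(S = 1, A = 0) (Y - g_{1,0}(X))`. Conditionally on `X` the residual has mean
zero, hence so does the product. -/

open scoped Classical BigOperators
open Finset

noncomputable section

/-- Indicator of a proposition. -/
def ind (P : Prop) : ℝ := if P then 1 else 0

/-- Expectation with respect to weights `p` on a finite outcome space. -/
def pexp {Ω : Type*} [Fintype Ω] (p : Ω → ℝ) (f : Ω → ℝ) : ℝ := ∑ ω, p ω * f ω

/-- Probability of an event. -/
def prob {Ω : Type*} [Fintype Ω] (p : Ω → ℝ) (B : Ω → Prop) : ℝ :=
  pexp p (fun ω => ind (B ω))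

/-- Conditional expectation of `f` given event `B`. -/
def cexp {Ω : Type*} [Fintype Ω] (p : Ω → ℝ) (f : Ω → ℝ) (B : Ω → Prop) : ℝ :=
  pexp p (fun ω => f ω * ind (B ω)) / prob p B

/-- Conditional probability of `B` given `C`. -/
def cprob {Ω : Type*} [Fintype Ω] (p : Ω → ℝ) (B C : Ω → Prop) : ℝ :=
  prob p (fun ω => B ω ∧ C ω) / prob p C

/-- Conditional outcome mean `g_{s,a}(x) = E[Y | X = x, S = s, A = a]`. -/
def gfun {Ω 𝒳 : Type*} [Fintype Ω] (p : Ω → ℝ) (X : Ω → 𝒳) (S A : Ω → ℕ)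
    (Y : Ω → ℝ) (s a : ℕ) (x : 𝒳) : ℝ :=
  cexp p Y (fun ω => X ω = x ∧ S ω = s ∧ A ω = a)

/-- Standardized functional `γ_{s,a} = E[ E[Y | X, S=s, A=a] | S=1 ]`. -/
def gam {Ω 𝒳 : Type*} [Fintype Ω] (p : Ω → ℝ) (X : Ω → 𝒳) (S A : Ω → ℕ)
    (Y : Ω → ℝ) (s a : ℕ) : ℝ :=
  cexp p (fun ω => gfun p X S A Y s a (X ω)) (fun ω => S ω = 1)

/-- Participation probability `p_s(x) = Pr[S = s | X = x]`. -/
def psel {Ω 𝒳 : Type*} [Fintype Ω] (p : Ω → ℝ) (X : Ω → 𝒳) (S : Ω → ℕ)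
    (s : ℕ) (x : 𝒳) : ℝ :=
  cprob p (fun ω => S ω = s) (fun ω => X ω = x)

/-- Treatment probability `e_{s,a}(x) = Pr[A = a | X = x, S = s]`. -/
def etrt {Ω 𝒳 : Type*} [Fintype Ω] (p : Ω → ℝ) (X : Ω → 𝒳) (S A : Ω → ℕ)
    (s a : ℕ) (x : 𝒳) : ℝ :=
  cprob p (fun ω => A ω = a) (fun ω => X ω = x ∧ S ω = s)

/-- Weight `w_{s,a}(X,S,A) = I(S=s, A=a) p_1(X) / (e_{s,a}(X) p_s(X))`. -/
def wgt {Ω 𝒳 : Type*} [Fintype Ω] (p : Ω → ℝ) (X : Ω → 𝒳) (S A : Ω → ℕ)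
    (s a : ℕ) (ω : Ω) : ℝ :=
  ind (S ω = s ∧ A ω = a) * psel p X S 1 (X ω) /
    (etrt p X S A s a (X ω) * psel p X S s (X ω))

/-- Influence function `Γ_{s,a}(O)`. -/
def Gam {Ω 𝒳 : Type*} [Fintype Ω] (p : Ω → ℝ) (X : Ω → 𝒳) (S A : Ω → ℕ)
    (Y : Ω → ℝ) (s a : ℕ) (ω : Ω) : ℝ :=
  (1 / prob p (fun ω' => S ω' = 1)) *
    (ind (S ω = 1) * (gfun p X S A Y s a (X ω) - gam p X S A Y s a)
      + wgt p X S A s a ω * (Y ω - gfun p X S A Y s a (X ω)))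

/-- Variance of `f` under `p`. -/
def pvar {Ω : Type*} [Fintype Ω] (p : Ω → ℝ) (f : Ω → ℝ) : ℝ :=
  pexp p (fun ω => (f ω - pexp p f) ^ 2)

lemma ind_nonneg (P : Prop) : 0 ≤ ind P := by
  unfold ind; split_ifs <;> norm_num

lemma ind_and (P Q : Prop) : ind (P ∧ Q) = ind P * ind Q := by
  by_cases hP : P <;> simp [ind, hP]

lemma pexp_congr_of_ne_zero {Ω : Type*} [Fintype Ω] {p f g : Ω → ℝ}
    (h : ∀ ω, p ω ≠ 0 → f ω = g ω) : pexp p f = pexp p g := by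
  refine sum_congr rfl fun ω _ => ?_
  by_cases hω : p ω = 0
  · simp [hω]
  · rw [h ω hω]

lemma prob_pos {Ω : Type*} [Fintype Ω] {p : Ω → ℝ} (hp0 : ∀ ω, 0 ≤ p ω)
    {B : Ω → Prop} {ω : Ω} (hB : B ω) (hω : 0 < p ω) : 0 < prob p B :=
  calc 0 < p ω * ind (B ω) := by simpa [ind, hB] using hω
    _ ≤ prob p B :=
      single_le_sum (f := fun ω => p ω * ind (B ω))
        (fun ω _ => mul_nonneg (hp0 ω) (ind_nonneg _)) (mem_univ ω)

lemma pexp_ind_mul_sub_cexp {Ω : Type*} [Fintype Ω] {p : Ω → ℝ} (hp0 : ∀ ω, 0 ≤ p ω)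
    (f : Ω → ℝ) (B : Ω → Prop) :
    pexp p (fun ω => ind (B ω) * (f ω - cexp p f B)) = 0 := by
  by_cases hB : prob p B = 0
  · refine sum_eq_zero fun ω _ => ?_
    by_cases hBω : B ω
    · have hω : p ω = 0 := by
        by_contra hω
        exact hB.not_gt (prob_pos hp0 hBω ((hp0 ω).lt_of_ne' hω))
      simp [hω]
    · simp [ind, hBω]
  · have hsplit : pexp p (fun ω => ind (B ω) * (f ω - cexp p f B))
        = pexp p (fun ω => f ω * ind (B ω)) - cexp p f B * prob p B := by
      simp only [pexp, prob, mul_sum, ← sum_sub_distrib]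
      exact sum_congr rfl fun ω _ => by ring
    rw [hsplit, cexp, div_mul_cancel₀ _ hB, sub_self]

lemma pexp_eq_sum_image {Ω 𝒳 : Type*} [Fintype Ω] (p : Ω → ℝ) (X : Ω → 𝒳) (f : Ω → ℝ) :
    pexp p f = ∑ x ∈ univ.image X, pexp p (fun ω => ind (X ω = x) * f ω) := by
  rw [pexp, ← sum_fiberwise_of_maps_to (fun ω _ => mem_image_of_mem X (mem_univ ω))]
  refine sum_congr rfl fun x _ => ?_
  rw [sum_filter, pexp]
  refine sum_congr rfl fun ω _ => ?_
  by_cases hx : X ω = x <;> simp [ind, hx]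

section InfluenceFunctions

variable {Ω 𝒳 : Type*} [Fintype Ω] {p : Ω → ℝ} {X : Ω → 𝒳} {S A : Ω → ℕ} {Y : Ω → ℝ}

lemma pexp_mul_residual_eq_zero (hp0 : ∀ ω, 0 ≤ p ω) (φ : 𝒳 → ℝ) (s a : ℕ) :
    pexp p (fun ω => φ (X ω) * ind (S ω = s ∧ A ω = a) *
      (Y ω - gfun p X S A Y s a (X ω))) = 0 := by
  rw [pexp_eq_sum_image p X]
  refine sum_eq_zero fun x _ => ?_
  calc pexp p (fun ω => ind (X ω = x) * (φ (X ω) * ind (S ω = s ∧ A ω = a) *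
          (Y ω - gfun p X S A Y s a (X ω))))
      = φ x * pexp p (fun ω => ind (X ω = x ∧ S ω = s ∧ A ω = a) *
          (Y ω - gfun p X S A Y s a x)) := by
        rw [pexp, pexp, mul_sum]
        refine sum_congr rfl fun ω _ => ?_
        by_cases hx : X ω = x
        · rw [hx, ind_and (x = x)]; ring
        · simp [ind, hx]
    _ = 0 := by rw [gfun, pexp_ind_mul_sub_cexp hp0, mul_zero]

lemma gam_eq_gam_of_gfun_eq {s a s' a' : ℕ}
    (h : ∀ ω, p ω ≠ 0 → S ω = 1 → gfun p X S A Y s a (X ω) = gfun p X S A Y s' a' (X ω)) :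
    gam p X S A Y s a = gam p X S A Y s' a' := by
  rw [gam, gam, cexp, cexp, pexp_congr_of_ne_zero fun ω hω => ?_]
  by_cases hS : S ω = 1
  · rw [h ω hω hS]
  · simp [ind, hS]

def residualCoeff (p : Ω → ℝ) (X : Ω → 𝒳) (S A : Ω → ℕ) (Y : Ω → ℝ) (x : 𝒳) : ℝ :=
  (1 / prob p (fun ω => S ω = 1)) ^ 2 *
    (psel p X S 1 x / (etrt p X S A 1 0 x * psel p X S 1 x)) *
    ((gfun p X S A Y 1 1 x - gam p X S A Y 1 1) - (gfun p X S A Y 0 2 x - gam p X S A Y 0 2))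

lemma Gam_diff_mul_Gam_diff {ω : Ω} (hS : S ω = 0 ∨ S ω = 1)
    (hg : S ω = 1 → gfun p X S A Y 1 0 (X ω) = gfun p X S A Y 0 0 (X ω))
    (hγ : gam p X S A Y 1 0 = gam p X S A Y 0 0) :
    (Gam p X S A Y 1 0 ω - Gam p X S A Y 0 0 ω) * (Gam p X S A Y 1 1 ω - Gam p X S A Y 0 2 ω)
      = residualCoeff p X S A Y (X ω) * ind (S ω = 1 ∧ A ω = 0) *
          (Y ω - gfun p X S A Y 1 0 (X ω)) := by
  rcases hS with hS | hS
  · by_cases hA : A ω = 0 <;> simp [Gam, wgt, ind, hS, hA]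
  · by_cases hA : A ω = 0
    · simp only [Gam, wgt, residualCoeff, ind, hS, hA, hg hS, hγ, ↓reduceIte, and_self, and_true,
        and_false, one_ne_zero, zero_ne_one, OfNat.zero_ne_ofNat, one_div, one_mul, mul_one,
        zero_mul, zero_div, add_zero, inv_pow]
      ring
    · simp [Gam, wgt, ind, hS, hA, hg hS, hγ]

end InfluenceFunctions

theorem statement10_general
    {Ω 𝒳 : Type*} [Fintype Ω] (p : Ω → ℝ)
    (hp0 : ∀ ω, 0 ≤ p ω)
    (X : Ω → 𝒳) (S A : Ω → ℕ) (Y : Ω → ℝ)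
    (hbin : ∀ ω, S ω = 0 ∨ S ω = 1)
    (htrans : ∀ x, 0 < prob p (fun ω => X ω = x ∧ S ω = 1) →
      gfun p X S A Y 1 0 x = gfun p X S A Y 0 0 x) :
    pexp p (fun ω =>
      (Gam p X S A Y 1 0 ω - Gam p X S A Y 0 0 ω) *
        (Gam p X S A Y 1 1 ω - Gam p X S A Y 0 2 ω)) = 0 := by
  have hg : ∀ ω, p ω ≠ 0 → S ω = 1 →
      gfun p X S A Y 1 0 (X ω) = gfun p X S A Y 0 0 (X ω) := fun ω hω hS =>
    htrans _ (prob_pos hp0 (B := fun ω' => X ω' = X ω ∧ S ω' = 1) ⟨rfl, hS⟩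
      ((hp0 ω).lt_of_ne' hω))
  have hγ : gam p X S A Y 1 0 = gam p X S A Y 0 0 := gam_eq_gam_of_gfun_eq hg
  rw [pexp_congr_of_ne_zero fun ω hω => Gam_diff_mul_Gam_diff (hbin ω) (hg ω hω) hγ]
  exact pexp_mul_residual_eq_zero hp0 _ 1 0

theorem statement10
    {Ω 𝒳 : Type*} [Fintype Ω] (p : Ω → ℝ)
    (hp0 : ∀ ω, 0 ≤ p ω) (hp1 : ∑ ω, p ω = 1)
    (X : Ω → 𝒳) (S A : Ω → ℕ) (Y : Ω → ℝ)
    (hbin : ∀ ω, S ω = 0 ∨ S ω = 1)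
    (hz0 : 0 < prob p (fun ω => S ω = 1)) (hz1 : prob p (fun ω => S ω = 1) < 1)
    (hposp : ∀ x, 0 < prob p (fun ω => X ω = x) →
      0 < psel p X S 1 x ∧ psel p X S 1 x < 1)
    (hpose : ∀ x, 0 < prob p (fun ω => X ω = x) →
      0 < etrt p X S A 1 1 x ∧ 0 < etrt p X S A 1 0 x ∧
        0 < etrt p X S A 0 2 x ∧ 0 < etrt p X S A 0 0 x)
    (htrans : ∀ x, 0 < prob p (fun ω => X ω = x ∧ S ω = 1) →
      gfun p X S A Y 1 0 x = gfun p X S A Y 0 0 x) :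
    pexp p (fun ω =>
      (Gam p X S A Y 1 0 ω - Gam p X S A Y 0 0 ω) *
        (Gam p X S A Y 1 1 ω - Gam p X S A Y 0 2 ω)) = 0 :=
  statement10_general p hp0 X S A Y hbin htrans
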